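/- Every Steiner triple system S on 7 vertices satisfies mc_3(S) = 6 and α*_3(S) = 1. -/

import Mathlib

universe u

/-- There is a `k`-partite hole of size `a`: pairwise disjoint sets `X 0, …, X (k-1)`,
each of size `a`, such that no edge intersects all of them. -/
def HasHole {V : Type u} (k : ℕ) (E : Finset (Finset V)) (a : ℕ) : Prop :=
  ∃ X : Fin k → Finset V,
    (∀ i, (X i).card = a) ∧
    (∀ i j, i ≠ j → Disjoint (X i) (X j)) ∧
    ∀ e ∈ E, ∃ i, ∀ v ∈ e, v ∉ X i

/-- The `k`-partite-hole number `α*_k`: the largest size of a `k`-partite hole. -/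
noncomputable def holeNumber {V : Type u} (k : ℕ) (E : Finset (Finset V)) : ℕ :=
  sSup {a | HasHole k E a}

/-- The shadow graph of the color class `c` of the edge-coloring `χ`. -/
def colorGraph {V : Type u} {r : ℕ} (E : Finset (Finset V)) (χ : Finset V → Fin r)
    (c : Fin r) : SimpleGraph V where
  Adj x y := x ≠ y ∧ ∃ e ∈ E, χ e = c ∧ x ∈ e ∧ y ∈ e
  symm := by
    refine ⟨?_⟩
    rintro x y ⟨hxy, e, he, hc, hx, hy⟩
    exact ⟨hxy.symm, e, he, hc, hy, hx⟩
  loopless := by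
    refine ⟨?_⟩
    rintro x ⟨h, -⟩
    exact h rfl

/-- The largest order of a monochromatic component under the edge-coloring `χ`. -/
noncomputable def maxMonoComponent {V : Type u} (r : ℕ) (E : Finset (Finset V))
    (χ : Finset V → Fin r) : ℕ :=
  sSup {m | ∃ c : Fin r, ∃ K : (colorGraph E χ c).ConnectedComponent, m = K.supp.ncard}

/-- `mc r E`: the largest `m` such that every `r`-coloring of the edges of `E` yields a
monochromatic component of order at least `m` (equivalently, the minimum over all colorings
of the largest order of a monochromatic component). -/
noncomputable def mc {V : Type u} (r : ℕ) (E : Finset (Finset V)) : ℕ :=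
  sInf {m | ∃ χ : Finset V → Fin r, m = maxMonoComponent r E χ}

/-- `E` is the edge set of a Steiner triple system on `V`: every edge has three vertices and
every pair of distinct vertices is contained in exactly one edge. -/
def IsSTS {V : Type u} (E : Finset (Finset V)) : Prop :=
  (∀ e ∈ E, e.card = 3) ∧
  ∀ x y : V, x ≠ y → ∃! e, e ∈ E ∧ x ∈ e ∧ y ∈ e

open Finset

section Aux
variable {V : Type u} [Fintype V] [DecidableEq V] {E : Finset (Finset V)}

lemma edge_unique (hE : IsSTS E) {e f : Finset V} (he : e ∈ E) (hf : f ∈ E)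
    {x y : V} (hxy : x ≠ y) (hxe : x ∈ e) (hye : y ∈ e) (hxf : x ∈ f) (hyf : y ∈ f) :
    e = f := by
  obtain ⟨g, -, hu⟩ := hE.2 x y hxy
  rw [hu e ⟨he, hxe, hye⟩, hu f ⟨hf, hxf, hyf⟩]

lemma line_exists (hE : IsSTS E) {x y : V} (hxy : x ≠ y) :
    ∃ e ∈ E, x ∈ e ∧ y ∈ e := by
  obtain ⟨e, he, -⟩ := hE.2 x y hxy
  exact ⟨e, he.1, he.2⟩

lemma card_E (hV : Fintype.card V = 7) (hE : IsSTS E) : E.card = 7 := by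
  have key : (univ : Finset V).powersetCard 2 = E.biUnion (fun e => e.powersetCard 2) := by
    ext t
    simp only [mem_powersetCard, mem_biUnion]
    constructor
    · rintro ⟨-, ht2⟩
      obtain ⟨x, y, hxy, rfl⟩ := Finset.card_eq_two.mp ht2
      obtain ⟨e, he, hx, hy⟩ := line_exists hE hxy
      exact ⟨e, he, by simp [Finset.insert_subset_iff, hx, hy], ht2⟩
    · rintro ⟨e, -, -, ht2⟩
      exact ⟨subset_univ t, ht2⟩
  have hdisj : ∀ e ∈ E, ∀ f ∈ E, e ≠ f →
      Disjoint (e.powersetCard 2) (f.powersetCard 2) := by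
    intro e he f hf hef
    rw [Finset.disjoint_left]
    intro t hte htf
    rw [mem_powersetCard] at hte htf
    obtain ⟨x, y, hxy, rfl⟩ := Finset.card_eq_two.mp hte.2
    exact hef (edge_unique hE he hf hxy (hte.1 (by simp)) (hte.1 (by simp))
      (htf.1 (by simp)) (htf.1 (by simp)))
  have h1 := congrArg Finset.card key
  rw [Finset.card_biUnion hdisj, Finset.card_powersetCard, card_univ, hV] at h1
  have h2 : ∑ e ∈ E, (e.powersetCard 2).card = ∑ _e ∈ E, 3 := by
    apply Finset.sum_congr rfl
    intro e he
    rw [Finset.card_powersetCard, hE.1 e he]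
    decide
  rw [h2, Finset.sum_const, smul_eq_mul] at h1
  norm_num [Nat.choose] at h1
  omega

lemma lines_through (hV : Fintype.card V = 7) (hE : IsSTS E) (p : V) :
    (E.filter fun e => p ∈ e).card = 3 := by
  have key : (univ : Finset V).erase p = (E.filter fun e => p ∈ e).biUnion (fun e => e.erase p) := by
    ext q
    simp only [mem_erase, mem_univ, and_true, mem_biUnion, mem_filter]
    constructor
    · intro hq
      obtain ⟨e, he, hpe, hqe⟩ := line_exists hE (Ne.symm hq)
      exact ⟨e, ⟨he, hpe⟩, hq, hqe⟩
    · rintro ⟨e, -, hq, -⟩; exact hq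
  have hdisj : ∀ e ∈ E.filter (fun e => p ∈ e), ∀ f ∈ E.filter (fun e => p ∈ e), e ≠ f →
      Disjoint (e.erase p) (f.erase p) := by
    intro e he f hf hef
    rw [Finset.disjoint_left]
    intro q hqe hqf
    rw [mem_erase] at hqe hqf
    rw [mem_filter] at he hf
    exact hef (edge_unique hE he.1 hf.1 (Ne.symm hqe.1) he.2 hqe.2 hf.2 hqf.2)
  have h1 := congrArg Finset.card key
  rw [Finset.card_biUnion hdisj, Finset.card_erase_of_mem (mem_univ p), card_univ, hV] at h1
  have h2 : ∑ e ∈ E.filter (fun e => p ∈ e), (e.erase p).card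
      = ∑ e ∈ E.filter (fun e => p ∈ e), 2 := by
    apply Finset.sum_congr rfl
    intro e he
    rw [mem_filter] at he
    rw [Finset.card_erase_of_mem he.2, hE.1 e he.1]
  rw [h2, Finset.sum_const, smul_eq_mul] at h1
  omega

lemma meets_pair (hV : Fintype.card V = 7) (hE : IsSTS E) {a b : V} (hab : a ≠ b) :
    (E.filter fun e => a ∈ e ∨ b ∈ e).card = 5 := by
  have hone : E.filter (fun e => a ∈ e ∧ b ∈ e) = {Classical.choose (hE.2 a b hab)} := by
    obtain ⟨he, hu⟩ := Classical.choose_spec (hE.2 a b hab)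
    ext f
    simp only [mem_filter, mem_singleton]
    constructor
    · rintro ⟨hf, ha, hb⟩
      exact hu f ⟨hf, ha, hb⟩
    · rintro rfl
      exact ⟨he.1, he.2⟩
  have h2 : (E.filter fun e => a ∈ e ∨ b ∈ e).card
      + (E.filter fun e => a ∈ e ∧ b ∈ e).card
      = (E.filter fun e => a ∈ e).card + (E.filter fun e => b ∈ e).card := by
    rw [Finset.filter_or, Finset.filter_and]
    exact Finset.card_union_add_card_inter _ _
  rw [hone, Finset.card_singleton, lines_through hV hE a, lines_through hV hE b] at h2
  omega

lemma miss_pair (hV : Fintype.card V = 7) (hE : IsSTS E) {a b : V} (hab : a ≠ b) :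
    (E.filter fun e => a ∉ e ∧ b ∉ e).card = 2 := by
  have h1 := Finset.card_filter_add_card_filter_not (s := E)
    (p := fun e => a ∈ e ∨ b ∈ e)
  have h2 : E.filter (fun e => ¬(a ∈ e ∨ b ∈ e)) = E.filter (fun e => a ∉ e ∧ b ∉ e) := by
    apply Finset.filter_congr
    intro e _
    simp [not_or]
  rw [h2, meets_pair hV hE hab, card_E hV hE] at h1
  omega

lemma edges_meet (hV : Fintype.card V = 7) (hE : IsSTS E) {e f : Finset V}
    (he : e ∈ E) (hf : f ∈ E) : (e ∩ f).Nonempty := by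
  by_cases hef : e = f
  · subst hef
    rw [Finset.inter_self]
    exact Finset.card_pos.mp (by rw [hE.1 e he]; norm_num)
  by_contra hcon
  rw [Finset.not_nonempty_iff_eq_empty, ← Finset.disjoint_iff_inter_eq_empty] at hcon
  obtain ⟨p, hp⟩ : e.Nonempty := Finset.card_pos.mp (by rw [hE.1 e he]; norm_num)
  obtain ⟨q1, q2, q3, h12, h13, h23, hfeq⟩ := Finset.card_eq_three.mp (hE.1 f hf)
  have hq1 : q1 ∈ f := by rw [hfeq]; simp
  have hq2 : q2 ∈ f := by rw [hfeq]; simp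
  have hq3 : q3 ∈ f := by rw [hfeq]; simp
  have hpq : ∀ q ∈ f, p ≠ q := fun q hq hpq => (Finset.disjoint_left.mp hcon hp) (hpq ▸ hq)
  obtain ⟨L1, hL1E, hpL1, hq1L1⟩ := line_exists hE (hpq q1 hq1)
  obtain ⟨L2, hL2E, hpL2, hq2L2⟩ := line_exists hE (hpq q2 hq2)
  obtain ⟨L3, hL3E, hpL3, hq3L3⟩ := line_exists hE (hpq q3 hq3)
  have hLe : ∀ (L : Finset V) (q : V), q ∈ L → q ∈ f → L ≠ e := by
    intro L q hqL hqf hLeq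
    exact (Finset.disjoint_left.mp hcon (hLeq ▸ hqL)) hqf
  have hL1e := hLe L1 q1 hq1L1 hq1
  have hL2e := hLe L2 q2 hq2L2 hq2
  have hL3e := hLe L3 q3 hq3L3 hq3
  have hLL : ∀ (L L' : Finset V), L ∈ E → L' ∈ E → p ∈ L → p ∈ L' →
      ∀ (q q' : V), q ≠ q' → q ∈ f → q' ∈ f → q ∈ L → q' ∈ L' → L ≠ L' := by
    intro L L' hL hL' hpL' hpL'' q q' hqq hqf hq'f hqL hq'L' hEq
    subst hEq
    have : L = f := edge_unique hE hL hf hqq hqL hq'L' hqf hq'f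
    exact (Finset.disjoint_left.mp hcon hp) (this ▸ hpL')
  have hL12 := hLL L1 L2 hL1E hL2E hpL1 hpL2 q1 q2 h12 hq1 hq2 hq1L1 hq2L2
  have hL13 := hLL L1 L3 hL1E hL3E hpL1 hpL3 q1 q3 h13 hq1 hq3 hq1L1 hq3L3
  have hL23 := hLL L2 L3 hL2E hL3E hpL2 hpL3 q2 q3 h23 hq2 hq3 hq2L2 hq3L3
  have hsub : ({e, L1, L2, L3} : Finset (Finset V)) ⊆ E.filter (fun g => p ∈ g) := by
    intro g hg
    simp only [mem_insert, mem_singleton] at hg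
    rw [mem_filter]
    rcases hg with rfl | rfl | rfl | rfl
    · exact ⟨he, hp⟩
    · exact ⟨hL1E, hpL1⟩
    · exact ⟨hL2E, hpL2⟩
    · exact ⟨hL3E, hpL3⟩
  have hcard : ({e, L1, L2, L3} : Finset (Finset V)).card = 4 := by
    rw [Finset.card_insert_of_notMem (by simp [Ne.symm hL1e, Ne.symm hL2e, Ne.symm hL3e]),
      Finset.card_insert_of_notMem (by simp [hL12, hL13]),
      Finset.card_insert_of_notMem (by simp [hL23]), Finset.card_singleton]
  have := Finset.card_le_card hsub
  rw [hcard, lines_through hV hE p] at this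
  omega

lemma inter_card_le (hE : IsSTS E) {e f : Finset V} (he : e ∈ E) (hf : f ∈ E)
    (hef : e ≠ f) : (e ∩ f).card ≤ 1 := by
  by_contra h
  push_neg at h
  obtain ⟨x, hx, y, hy, hxy⟩ := Finset.one_lt_card.mp h
  rw [mem_inter] at hx hy
  exact hef (edge_unique hE he hf hxy hx.1 hy.1 hx.2 hy.2)

lemma three_union (hV : Fintype.card V = 7) (hE : IsSTS E) {e1 e2 e3 : Finset V}
    (h1 : e1 ∈ E) (h2 : e2 ∈ E) (h3 : e3 ∈ E)
    (h12 : e1 ≠ e2) (h13 : e1 ≠ e3) (h23 : e2 ≠ e3) :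
    6 ≤ (e1 ∪ e2 ∪ e3).card := by
  have c12 : (e1 ∩ e2).card = 1 :=
    le_antisymm (inter_card_le hE h1 h2 h12) (Finset.card_pos.mpr (edges_meet hV hE h1 h2))
  have u12 : (e1 ∪ e2).card + (e1 ∩ e2).card = e1.card + e2.card :=
    Finset.card_union_add_card_inter _ _
  have u123 : (e1 ∪ e2 ∪ e3).card + ((e1 ∪ e2) ∩ e3).card = (e1 ∪ e2).card + e3.card :=
    Finset.card_union_add_card_inter _ _
  have hsub : (e1 ∪ e2) ∩ e3 ⊆ (e1 ∩ e3) ∪ (e2 ∩ e3) := by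
    intro x hx
    simp only [mem_inter, mem_union] at hx ⊢
    tauto
  have hb : ((e1 ∪ e2) ∩ e3).card ≤ 2 := by
    refine le_trans (Finset.card_le_card hsub) (le_trans (Finset.card_union_le _ _) ?_)
    have := inter_card_le hE h1 h3 h13
    have := inter_card_le hE h2 h3 h23
    omega
  have := hE.1 e1 h1
  have := hE.1 e2 h2
  have := hE.1 e3 h3
  omega

end Aux

section Main
variable {V : Type u} [Fintype V] [DecidableEq V] {E : Finset (Finset V)}

lemma hole_one (hV : Fintype.card V = 7) (hE : IsSTS E) : HasHole 3 E 1 := by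
  obtain ⟨e, he⟩ : E.Nonempty := Finset.card_pos.mp (by rw [card_E hV hE]; norm_num)
  obtain ⟨x, y, z, hxy, hxz, hyz, heq⟩ := Finset.card_eq_three.mp (hE.1 e he)
  have hx : x ∈ e := by rw [heq]; simp
  have hy : y ∈ e := by rw [heq]; simp
  obtain ⟨u, hu⟩ : ∃ u, u ∉ e := by
    by_contra h
    push_neg at h
    have hs : (univ : Finset V) ⊆ e := fun v _ => h v
    have := Finset.card_le_card hs
    rw [card_univ, hV, hE.1 e he] at this
    omega
  have hxu : x ≠ u := fun h => hu (h ▸ hx)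
  have hyu : y ≠ u := fun h => hu (h ▸ hy)
  refine ⟨![{x}, {y}, {u}], ?_, ?_, ?_⟩
  · intro i; fin_cases i <;> simp
  · intro i j hij
    fin_cases i <;> fin_cases j <;>
      simp_all [Finset.disjoint_singleton, hxy, hxu, hyu, Ne.symm hxy, Ne.symm hxu, Ne.symm hyu]
  · intro f hf
    by_cases hxf : x ∈ f
    · by_cases hyf : y ∈ f
      · have hfe : f = e := edge_unique hE hf he hxy hxf hyf hx hy
        refine ⟨2, ?_⟩
        intro v hv hv'
        have : v = u := by simpa using hv'
        exact hu (hfe ▸ this ▸ hv)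
      · refine ⟨1, ?_⟩
        intro v hv hv'
        have : v = y := by simpa using hv'
        exact hyf (this ▸ hv)
    · refine ⟨0, ?_⟩
      intro v hv hv'
      have : v = x := by simpa using hv'
      exact hxf (this ▸ hv)

lemma hole_le_one (hV : Fintype.card V = 7) (hE : IsSTS E) {a : ℕ}
    (h : HasHole 3 E a) : a ≤ 1 := by
  by_contra hcon
  push_neg at hcon
  obtain ⟨X, hcard, -, hX⟩ := h
  have hsmall : ∀ i : Fin 3, ∃ Y ⊆ X i, Y.card = 2 :=
    fun i => Finset.exists_subset_card_eq (by rw [hcard]; omega)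
  choose Y hYsub hYcard using hsmall
  have hab : ∀ i : Fin 3, ∃ a b, a ≠ b ∧ Y i = {a, b} :=
    fun i => Finset.card_eq_two.mp (hYcard i)
  choose A B hAB hYeq using hab
  have hAX : ∀ i, A i ∈ X i := fun i => hYsub i (by rw [hYeq i]; simp)
  have hBX : ∀ i, B i ∈ X i := fun i => hYsub i (by rw [hYeq i]; simp)
  have hsub : E ⊆ (E.filter fun e => A 0 ∉ e ∧ B 0 ∉ e)
      ∪ (E.filter fun e => A 1 ∉ e ∧ B 1 ∉ e)
      ∪ (E.filter fun e => A 2 ∉ e ∧ B 2 ∉ e) := by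
    intro e he
    obtain ⟨i, hi⟩ := hX e he
    have hmiss : A i ∉ e ∧ B i ∉ e :=
      ⟨fun h => hi _ h (hAX i), fun h => hi _ h (hBX i)⟩
    simp only [mem_union, mem_filter]
    fin_cases i
    · exact Or.inl (Or.inl ⟨he, hmiss⟩)
    · exact Or.inl (Or.inr ⟨he, hmiss⟩)
    · exact Or.inr ⟨he, hmiss⟩
  have hle := Finset.card_le_card hsub
  have h0 := miss_pair hV hE (hAB 0)
  have h1 := miss_pair hV hE (hAB 1)
  have h2 := miss_pair hV hE (hAB 2)
  have hu1 := Finset.card_union_le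
    ((E.filter fun e => A 0 ∉ e ∧ B 0 ∉ e) ∪ (E.filter fun e => A 1 ∉ e ∧ B 1 ∉ e))
    (E.filter fun e => A 2 ∉ e ∧ B 2 ∉ e)
  have hu2 := Finset.card_union_le
    (E.filter fun e => A 0 ∉ e ∧ B 0 ∉ e) (E.filter fun e => A 1 ∉ e ∧ B 1 ∉ e)
  rw [card_E hV hE] at hle
  omega

lemma hole_number_eq (hV : Fintype.card V = 7) (hE : IsSTS E) : holeNumber 3 E = 1 := by
  unfold holeNumber
  apply le_antisymm
  · exact csSup_le ⟨1, hole_one hV hE⟩ (fun a ha => hole_le_one hV hE ha)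
  · exact le_csSup ⟨1, fun a ha => hole_le_one hV hE ha⟩ (hole_one hV hE)

lemma reach_of_edge {χ : Finset V → Fin 3} {c : Fin 3} {x y : V} {e : Finset V}
    (he : e ∈ E) (hc : χ e = c) (hx : x ∈ e) (hy : y ∈ e) :
    (colorGraph E χ c).Reachable x y := by
  by_cases hxy : x = y
  · subst hxy; exact SimpleGraph.Reachable.refl x
  · exact SimpleGraph.Adj.reachable ⟨hxy, e, he, hc, hx, hy⟩

lemma mono_lower (hV : Fintype.card V = 7) (hE : IsSTS E) (χ : Finset V → Fin 3) :
    6 ≤ maxMonoComponent 3 E χ := by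
  have hmap : ∀ e ∈ E, χ e ∈ (univ : Finset (Fin 3)) := fun _ _ => mem_univ _
  have hlt : (univ : Finset (Fin 3)).card * 2 < E.card := by
    rw [card_E hV hE, card_univ, Fintype.card_fin]
    norm_num
  obtain ⟨c, -, hc⟩ := Finset.exists_lt_card_fiber_of_mul_lt_card_of_maps_to hmap hlt
  obtain ⟨t, hts, ht3⟩ := Finset.exists_subset_card_eq (n := 3) hc
  obtain ⟨e1, e2, e3, h12, h13, h23, rfl⟩ := Finset.card_eq_three.mp ht3
  have hm : ∀ e ∈ ({e1, e2, e3} : Finset (Finset V)), e ∈ E ∧ χ e = c :=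
    fun e he => Finset.mem_filter.mp (hts he)
  have he1 := hm e1 (by simp)
  have he2 := hm e2 (by simp)
  have he3 := hm e3 (by simp)
  obtain ⟨u0, hu0⟩ : e1.Nonempty := Finset.card_pos.mp (by rw [hE.1 e1 he1.1]; norm_num)
  set G := colorGraph E χ c with hG
  have hsupp : ↑(e1 ∪ e2 ∪ e3) ⊆ (G.connectedComponentMk u0).supp := by
    intro v hv
    rw [SimpleGraph.ConnectedComponent.mem_supp_iff]
    apply SimpleGraph.ConnectedComponent.sound
    have hv' : v ∈ e1 ∨ v ∈ e2 ∨ v ∈ e3 := by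
      simpa [Finset.mem_union, or_assoc] using hv
    rcases hv' with h | h | h
    · exact reach_of_edge he1.1 he1.2 h hu0
    · obtain ⟨p, hp⟩ := edges_meet hV hE he2.1 he1.1
      rw [mem_inter] at hp
      exact (reach_of_edge he2.1 he2.2 h hp.1).trans (reach_of_edge he1.1 he1.2 hp.2 hu0)
    · obtain ⟨p, hp⟩ := edges_meet hV hE he3.1 he1.1
      rw [mem_inter] at hp
      exact (reach_of_edge he3.1 he3.2 h hp.1).trans (reach_of_edge he1.1 he1.2 hp.2 hu0)
  have h6 : 6 ≤ (G.connectedComponentMk u0).supp.ncard := by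
    calc 6 ≤ (e1 ∪ e2 ∪ e3).card := three_union hV hE he1.1 he2.1 he3.1 h12 h13 h23
    _ = (↑(e1 ∪ e2 ∪ e3) : Set V).ncard := (Set.ncard_coe_finset _).symm
    _ ≤ _ := Set.ncard_le_ncard hsupp (Set.toFinite _)
  refine le_trans h6 (le_csSup ?_ ?_)
  · refine ⟨7, ?_⟩
    rintro m ⟨c', K, rfl⟩
    calc K.supp.ncard ≤ (Set.univ : Set V).ncard :=
          Set.ncard_le_ncard (Set.subset_univ _) (Set.toFinite _)
    _ = 7 := by rw [Set.ncard_univ, Nat.card_eq_fintype_card, hV]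
  · exact ⟨c, _, rfl⟩

lemma supp_cases (E : Finset (Finset V)) (χ : Finset V → Fin 3) (c : Fin 3)
    (K : (colorGraph E χ c).ConnectedComponent) :
    (∃ v, K.supp = {v}) ∨ K.supp ⊆ {v | ∃ e ∈ E, χ e = c ∧ v ∈ e} := by
  by_cases h : ∀ v ∈ K.supp, ∃ e ∈ E, χ e = c ∧ v ∈ e
  · exact Or.inr h
  push_neg at h
  obtain ⟨v, hvK, hviso⟩ := h
  left
  refine ⟨v, ?_⟩
  ext u
  simp only [Set.mem_singleton_iff]
  constructor
  · intro hu
    rw [SimpleGraph.ConnectedComponent.mem_supp_iff] at hu hvK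
    have hreach : (colorGraph E χ c).Reachable v u :=
      SimpleGraph.ConnectedComponent.exact (hvK.trans hu.symm)
    obtain ⟨w⟩ := hreach
    cases w with
    | nil => rfl
    | cons hadj _ =>
      obtain ⟨-, e, he, hce, hv, -⟩ := hadj
      exact absurd hv (hviso e he hce)
  · rintro rfl
    exact hvK

lemma mono_upper (hV : Fintype.card V = 7) (hE : IsSTS E) :
    ∃ χ : Finset V → Fin 3, maxMonoComponent 3 E χ = 6 := by
  have hpos : 0 < Fintype.card V := by omega
  obtain ⟨w⟩ : Nonempty V := Fintype.card_pos_iff.mp hpos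
  obtain ⟨q, hq⟩ : ∃ q : V, q ≠ w := Fintype.exists_ne_of_one_lt_card (by omega) w
  obtain ⟨L1, hL1E, hwL1, hqL1⟩ := line_exists hE (Ne.symm hq)
  set χ0 : Finset V → Fin 3 := fun e => if w ∈ e then (if e = L1 then 1 else 2) else 0 with hχ0
  have hc0 : ∀ e, χ0 e = 0 → w ∉ e := by
    intro e h hw
    simp only [hχ0, if_pos hw] at h
    split_ifs at h <;> exact absurd h (by decide)
  have hc1 : ∀ e, χ0 e = 1 → e = L1 := by
    intro e h
    by_contra hne
    simp only [hχ0] at h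
    split_ifs at h <;> exact absurd h (by decide)
  have hc2 : ∀ e, χ0 e = 2 → w ∈ e ∧ e ≠ L1 := by
    intro e h
    simp only [hχ0] at h
    split_ifs at h with h1 h2
    · exact absurd h (by decide)
    · exact ⟨h1, h2⟩
    · exact absurd h (by decide)
  refine ⟨χ0, le_antisymm ?_ (mono_lower hV hE χ0)⟩
  apply csSup_le
  · exact ⟨_, 0, (colorGraph E χ0 0).connectedComponentMk w, rfl⟩
  rintro m ⟨c, K, rfl⟩
  rcases supp_cases E χ0 c K with ⟨v, hv⟩ | hsub
  · rw [hv, Set.ncard_singleton]; omega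
  fin_cases c
  · have hs : K.supp ⊆ ↑((univ : Finset V).erase w) := by
      intro v hv
      obtain ⟨e, he, hce, hve⟩ := hsub hv
      simp only [Finset.coe_erase, Set.mem_diff, Set.mem_singleton_iff]
      exact ⟨by simp, fun h => hc0 e hce (h ▸ hve)⟩
    calc K.supp.ncard ≤ ((univ : Finset V).erase w : Set V).ncard :=
          Set.ncard_le_ncard hs (Set.toFinite _)
    _ = ((univ : Finset V).erase w).card := Set.ncard_coe_finset _
    _ ≤ 6 := by rw [Finset.card_erase_of_mem (mem_univ w), card_univ, hV]
  · have hs : K.supp ⊆ ↑L1 := by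
      intro v hv
      obtain ⟨e, he, hce, hve⟩ := hsub hv
      have := hc1 e hce
      exact_mod_cast this ▸ hve
    calc K.supp.ncard ≤ (↑L1 : Set V).ncard := Set.ncard_le_ncard hs (Set.toFinite _)
    _ = L1.card := Set.ncard_coe_finset _
    _ ≤ 6 := by rw [hE.1 L1 hL1E]; omega
  · set R := (E.filter fun e => w ∈ e).erase L1 with hR
    have hs : K.supp ⊆ ↑(R.biUnion id) := by
      intro v hv
      obtain ⟨e, he, hce, hve⟩ := hsub hv
      obtain ⟨hwe, hneL1⟩ := hc2 e hce
      simp only [Finset.coe_biUnion, Set.mem_iUnion, id]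
      exact ⟨e, by simp [hR, Finset.mem_erase, hneL1, Finset.mem_filter, he, hwe], hve⟩
    have hRcard : R.card = 2 := by
      rw [hR, Finset.card_erase_of_mem (by rw [mem_filter]; exact ⟨hL1E, hwL1⟩),
        lines_through hV hE w]
    have hbi : (R.biUnion id).card ≤ 6 := by
      refine le_trans (Finset.card_biUnion_le) ?_
      have : ∀ e ∈ R, (id e).card = 3 := by
        intro e heR
        rw [hR] at heR
        exact hE.1 e (Finset.mem_filter.mp (Finset.mem_of_mem_erase heR)).1
      rw [Finset.sum_congr rfl this, Finset.sum_const, hRcard, smul_eq_mul]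
    calc K.supp.ncard ≤ (↑(R.biUnion id) : Set V).ncard :=
          Set.ncard_le_ncard hs (Set.toFinite _)
    _ = (R.biUnion id).card := Set.ncard_coe_finset _
    _ ≤ 6 := hbi

lemma mc_eq (hV : Fintype.card V = 7) (hE : IsSTS E) : mc 3 E = 6 := by
  unfold mc
  apply le_antisymm
  · obtain ⟨χ0, hχ0⟩ := mono_upper hV hE
    exact Nat.sInf_le ⟨χ0, hχ0.symm⟩
  · refine le_csInf ⟨_, fun _ => 0, rfl⟩ ?_
    rintro m ⟨χ, rfl⟩
    exact mono_lower hV hE χ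

end Main

/-- Every Steiner triple system on `7` vertices satisfies `mc_3(S) = 6` and `α*_3(S) = 1`. -/
theorem stmt19 {V : Type u} [Fintype V] (hV : Fintype.card V = 7)
    (E : Finset (Finset V)) (hE : IsSTS E) :
    mc 3 E = 6 ∧ holeNumber 3 E = 1 := by
  classical
  exact ⟨mc_eq hV hE, hole_number_eq hV hE⟩
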